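/- Let S be a recurrent neutral set over a finite alphabet A with A ⊆ S. For any finite S-maximal bifix code X ⊆ S of S-degree n, one has Card(X) = n(Card(A) − χ(S)) + χ(S). -/

import Mathlib

namespace Paper

variable {A : Type*}

/-- A set of words is factorial if it contains all factors (infixes) of its elements. -/
def Factorial (S : Set (List A)) : Prop :=
  ∀ u v : List A, u <:+: v → v ∈ S → u ∈ S

/-- Left extensions: `L_S(w) = {a | aw ∈ S}`. -/
def extL (S : Set (List A)) (w : List A) : Set A := {a | a :: w ∈ S}

/-- Right extensions: `R_S(w) = {a | wa ∈ S}`. -/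
def extR (S : Set (List A)) (w : List A) : Set A := {a | w ++ [a] ∈ S}

/-- Two-sided extensions: `E_S(w) = {(a,b) | awb ∈ S}`. -/
def extE (S : Set (List A)) (w : List A) : Set (A × A) := {p | p.1 :: (w ++ [p.2]) ∈ S}

/-- `m_S(w) = e_S(w) - ℓ_S(w) - r_S(w) + 1`. -/
noncomputable def mS (S : Set (List A)) (w : List A) : ℤ :=
  ((extE S w).ncard : ℤ) - (extL S w).ncard - (extR S w).ncard + 1

/-- A set is neutral if it is factorial and every nonempty word is neutral (`m_S(w) = 0`). -/
def Neutral (S : Set (List A)) : Prop :=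
  Factorial S ∧ ∀ w ∈ S, w ≠ [] → mS S w = 0

/-- The characteristic `χ(S) = 1 - m_S(ε)`. -/
noncomputable def chiS (S : Set (List A)) : ℤ := 1 - mS S []

end Paper

namespace Paper

/-- `ρ_S(x) = e_S(x) - ℓ_S(x)`. -/
noncomputable def rhoS {A : Type*} (S : Set (List A)) (w : List A) : ℤ :=
  ((extE S w).ncard : ℤ) - (extL S w).ncard

/-- `λ_S(x) = e_S(x) - r_S(x)`. -/
noncomputable def lamS {A : Type*} (S : Set (List A)) (w : List A) : ℤ :=
  ((extE S w).ncard : ℤ) - (extR S w).ncard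

/-- A prefix code: a set of nonempty words, none of which is a proper prefix of another. -/
def PrefixCode {A : Type*} (X : Set (List A)) : Prop :=
  [] ∉ X ∧ ∀ u ∈ X, ∀ v ∈ X, u <+: v → u = v

/-- A suffix code: a set of nonempty words, none of which is a proper suffix of another. -/
def SuffixCode {A : Type*} (X : Set (List A)) : Prop :=
  [] ∉ X ∧ ∀ u ∈ X, ∀ v ∈ X, u <:+ v → u = v

/-- A bifix code is both a prefix code and a suffix code. -/
def BifixCode {A : Type*} (X : Set (List A)) : Prop :=
  PrefixCode X ∧ SuffixCode X

/-- An `S`-maximal prefix code: a prefix code contained in `S` and not properly contained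
in another prefix code contained in `S`. -/
def MaxPrefixCode {A : Type*} (S X : Set (List A)) : Prop :=
  X ⊆ S ∧ PrefixCode X ∧ ∀ Y : Set (List A), PrefixCode Y → Y ⊆ S → X ⊆ Y → X = Y

/-- An `S`-maximal suffix code. -/
def MaxSuffixCode {A : Type*} (S X : Set (List A)) : Prop :=
  X ⊆ S ∧ SuffixCode X ∧ ∀ Y : Set (List A), SuffixCode Y → Y ⊆ S → X ⊆ Y → X = Y

/-- An `S`-maximal bifix code. -/
def MaxBifixCode {A : Type*} (S X : Set (List A)) : Prop :=
  X ⊆ S ∧ BifixCode X ∧ ∀ Y : Set (List A), BifixCode Y → Y ⊆ S → X ⊆ Y → X = Y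

/-- A set `S ≠ {ε}` is recurrent if it is factorial and any two of its words can be
completed into a word of `S`. -/
def Recurrent {A : Type*} (S : Set (List A)) : Prop :=
  S ≠ {([] : List A)} ∧ Factorial S ∧ ∀ u ∈ S, ∀ w ∈ S, ∃ v : List A, u ++ v ++ w ∈ S

/-- An infinite factorial set is uniformly recurrent if each of its words occurs as a
factor of every long enough word of `S`. -/
def UniformlyRecurrent {A : Type*} (S : Set (List A)) : Prop :=
  S.Infinite ∧ Factorial S ∧
    ∀ u ∈ S, ∃ n : ℕ, 1 ≤ n ∧ ∀ w ∈ S, w.length = n → u <:+: w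

/-- Membership in `X^*`: a concatenation of words of `X`. -/
def InStar {A : Type*} (X : Set (List A)) (m : List A) : Prop :=
  ∃ l : List (List A), (∀ u ∈ l, u ∈ X) ∧ l.flatten = m

/-- The set of parses of `w` with respect to a bifix code `X`: triples `(q, x, p)` with
`w = qxp`, `q` has no suffix in `X`, `x ∈ X^*`, `p` has no prefix in `X`. -/
def Parses {A : Type*} (X : Set (List A)) (w : List A) :
    Set (List A × List A × List A) :=
  {t | t.1 ++ t.2.1 ++ t.2.2 = w ∧ (∀ x ∈ X, ¬ x <:+ t.1) ∧ InStar X t.2.1 ∧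
        ∀ x ∈ X, ¬ x <+: t.2.2}

/-- The number of parses `d_X(w)`. -/
noncomputable def dX {A : Type*} (X : Set (List A)) (w : List A) : ℕ :=
  (Parses X w).ncard

/-- `X` has `S`-degree `n` : `n` is the maximal number of parses with respect to `X`
of a word of `S`. -/
def HasDegree {A : Type*} (S X : Set (List A)) (n : ℕ) : Prop :=
  IsGreatest (dX X '' S) n

/-- `v` is an internal factor of `x`, i.e. `x = uvw` with `u, w` nonempty. -/
def InternalFactor {A : Type*} (v x : List A) : Prop :=
  ∃ u w : List A, u ≠ [] ∧ w ≠ [] ∧ u ++ v ++ w = x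

/-- The set `CR_S(X)` of complete first return words to `X` in `S`: words of `S` with a
proper prefix in `X`, a proper suffix in `X` and no internal factor in `X`. -/
def CR {A : Type*} (S X : Set (List A)) : Set (List A) :=
  {w ∈ S | (∃ x ∈ X, x <+: w ∧ x ≠ w) ∧ (∃ x ∈ X, x <:+ w ∧ x ≠ w) ∧
    ∀ v : List A, InternalFactor v w → v ∉ X}

end Paper

/-!
Let `P` be the set of proper prefixes of `X`. In a recurrent set, a bifix code of finite degree
is prefix-comparable with every word of `S`, so every long word of `S` has a prefix in `X`; hence
`P` is finite, and counting the edges of the prefix tree of `X` gives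
`Card X = 1 + ∑_{p ∈ P} (r(p) - 1)`. Write `r - 1 = ρ - m` with `ρ = e - ℓ`: neutrality kills
`m` except at `ε`, and makes `ρ` harmonic, `ρ(w) = ∑_a ρ(aw)`. Adding a letter on the left of a
word raises its number of parses by one exactly when the new word lies in `P`, so the words of
`P` with `i ≥ 2` parses form the left boundary of the suffix-closed set of words with fewer
than `i` parses, and telescoping gives them total `ρ(ε) = Card A - χ(S)`; the only word of `P`
with one parse is `ε`. Summing over `i = 1, …, n`,
`Card X = 1 + n ρ(ε) - m(ε) = n (Card A - χ(S)) + χ(S)`.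
-/

namespace Paper

variable {A : Type*} {S X : Set (List A)}

theorem exists_append_flatten_eq (hX : [] ∉ X) (s : List A) :
    ∃ (q : List A) (l : List (List A)), (∀ u ∈ l, u ∈ X) ∧ q ++ l.flatten = s ∧
      ∀ x ∈ X, ¬ x <:+ q := by
  induction h : s.length using Nat.strong_induction_on generalizing s with
  | _ k ih =>
    by_cases hs : ∃ x ∈ X, x <:+ s
    · obtain ⟨x, hx, t, rfl⟩ := hs
      have hxlen : 0 < x.length := List.length_pos_iff.mpr fun h => hX (h ▸ hx)
      obtain ⟨q, l, hl, rfl, hq⟩ := ih t.length (by rw [← h, List.length_append]; omega) t rfl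
      refine ⟨q, l ++ [x], ?_, by simp, hq⟩
      simpa [or_imp, forall_and] using ⟨hl, hx⟩
    · exact ⟨s, [], by simp, by simp, fun x hx hxs => hs ⟨x, hx, hxs⟩⟩

theorem SuffixCode.eq_of_append_flatten_eq (hX : SuffixCode X) {q₁ q₂ : List A}
    {l₁ l₂ : List (List A)} (hl₁ : ∀ u ∈ l₁, u ∈ X) (hl₂ : ∀ u ∈ l₂, u ∈ X)
    (hq₁ : ∀ x ∈ X, ¬ x <:+ q₁) (hq₂ : ∀ x ∈ X, ¬ x <:+ q₂)
    (h : q₁ ++ l₁.flatten = q₂ ++ l₂.flatten) : q₁ = q₂ := by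
  induction l₁ using List.reverseRecOn generalizing l₂ with
  | nil =>
    induction l₂ using List.reverseRecOn with
    | nil => simpa using h
    | append_singleton l₂ x₂ _ =>
      exact absurd ⟨q₂ ++ l₂.flatten, by simpa using h.symm⟩ (hq₁ x₂ (hl₂ x₂ (by simp)))
  | append_singleton l₁ x₁ ih =>
    induction l₂ using List.reverseRecOn with
    | nil => exact absurd ⟨q₁ ++ l₁.flatten, by simpa using h⟩ (hq₂ x₁ (hl₁ x₁ (by simp)))
    | append_singleton l₂ x₂ _ =>
      simp only [List.flatten_append, List.flatten_cons, List.flatten_nil, List.append_nil,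
        ← List.append_assoc] at h
      have hx₁ : x₁ ∈ X := hl₁ x₁ (by simp)
      have hx₂ : x₂ ∈ X := hl₂ x₂ (by simp)
      have hx : x₁ = x₂ := by
        rcases List.suffix_or_suffix_of_suffix (h ▸ List.suffix_append _ x₁)
          (List.suffix_append _ x₂) with h' | h'
        · exact hX.2 x₁ hx₁ x₂ hx₂ h'
        · exact (hX.2 x₂ hx₂ x₁ hx₁ h').symm
      subst hx
      exact ih (fun u hu => hl₁ u (by simp [hu])) (fun u hu => hl₂ u (by simp [hu]))
        (List.append_cancel_right h)

def parseSuffixes (X : Set (List A)) (w : List A) : Set (List A) :=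
  {p | p <:+ w ∧ ∀ x ∈ X, ¬ x <+: p}

theorem parseSuffixes_finite (X : Set (List A)) (w : List A) : (parseSuffixes X w).Finite :=
  w.tails.finite_toSet.subset fun p hp => (List.mem_tails p w).mpr hp.1

theorem nil_mem_parseSuffixes (hX : [] ∉ X) (w : List A) : [] ∈ parseSuffixes X w :=
  ⟨List.nil_suffix, fun _ hx hx' => hX (List.prefix_nil.mp hx' ▸ hx)⟩

/-- A parse is determined by its last component, since `X` is a suffix code. -/
theorem dX_eq_ncard_parseSuffixes (hX : SuffixCode X) (w : List A) :
    dX X w = (parseSuffixes X w).ncard := by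
  have himage : (fun t : List A × List A × List A => t.2.2) '' Parses X w =
      parseSuffixes X w := by
    ext p
    constructor
    · rintro ⟨⟨q, m, p⟩, ⟨rfl, -, -, hp⟩, rfl⟩
      exact ⟨List.suffix_append _ _, hp⟩
    · rintro ⟨⟨s, rfl⟩, hp⟩
      obtain ⟨q, l, hl, rfl, hq⟩ := exists_append_flatten_eq hX.1 s
      exact ⟨⟨q, l.flatten, p⟩, ⟨rfl, hq, ⟨l, hl, rfl⟩, hp⟩, rfl⟩
  rw [dX, ← himage, Set.InjOn.ncard_image]
  rintro ⟨q₁, m₁, p⟩ ⟨h₁, hq₁, ⟨l₁, hl₁, rfl⟩, -⟩ ⟨q₂, m₂, p₂⟩ ⟨h₂, hq₂, ⟨l₂, hl₂, rfl⟩, -⟩ rfl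
  have h : q₁ ++ l₁.flatten = q₂ ++ l₂.flatten := List.append_cancel_right (h₁.trans h₂.symm)
  obtain rfl := hX.eq_of_append_flatten_eq hl₁ hl₂ hq₁ hq₂ h
  simp [List.append_cancel_left h]

theorem one_le_dX (hX : SuffixCode X) (w : List A) : 1 ≤ dX X w := by
  rw [dX_eq_ncard_parseSuffixes hX]
  exact (Set.ncard_pos (parseSuffixes_finite X w)).mpr ⟨[], nil_mem_parseSuffixes hX.1 w⟩

theorem dX_nil (hX : SuffixCode X) : dX X ([] : List A) = 1 := by
  rw [dX_eq_ncard_parseSuffixes hX, Set.ncard_eq_one]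
  exact ⟨[], Set.eq_singleton_iff_unique_mem.mpr
    ⟨nil_mem_parseSuffixes hX.1 [], fun p hp => List.suffix_nil.mp hp.1⟩⟩

theorem dX_le_dX_append (hX : SuffixCode X) (u w : List A) : dX X w ≤ dX X (u ++ w) := by
  rw [dX_eq_ncard_parseSuffixes hX, dX_eq_ncard_parseSuffixes hX]
  exact Set.ncard_le_ncard (fun p hp => ⟨hp.1.trans (List.suffix_append u w), hp.2⟩)
    (parseSuffixes_finite X _)

theorem dX_cons_of_forall_not_prefix (hX : SuffixCode X) {a : A} {w : List A}
    (h : ∀ x ∈ X, ¬ x <+: a :: w) : dX X (a :: w) = dX X w + 1 := by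
  have hcons : parseSuffixes X (a :: w) = insert (a :: w) (parseSuffixes X w) := by
    ext p
    simp only [parseSuffixes, Set.mem_insert_iff, Set.mem_ofPred_eq, List.suffix_cons_iff]
    constructor
    · rintro ⟨rfl | hp, hp'⟩
      · exact Or.inl rfl
      · exact Or.inr ⟨hp, hp'⟩
    · rintro (rfl | ⟨hp, hp'⟩)
      · exact ⟨Or.inl rfl, h⟩
      · exact ⟨Or.inr hp, hp'⟩
  rw [dX_eq_ncard_parseSuffixes hX, dX_eq_ncard_parseSuffixes hX, hcons,
    Set.ncard_insert_of_notMem _ (parseSuffixes_finite X w)]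
  exact fun hmem => by simpa using hmem.1.length_le

theorem dX_cons_of_prefix (hX : SuffixCode X) {a : A} {w x : List A} (hx : x ∈ X)
    (h : x <+: a :: w) : dX X (a :: w) = dX X w := by
  rw [dX_eq_ncard_parseSuffixes hX, dX_eq_ncard_parseSuffixes hX]
  congr 1
  ext p
  simp only [parseSuffixes, Set.mem_ofPred_eq, List.suffix_cons_iff]
  constructor
  · rintro ⟨rfl | hp, hp'⟩
    · exact absurd h (hp' x hx)
    · exact ⟨hp, hp'⟩
  · exact fun ⟨hp, hp'⟩ => ⟨Or.inr hp, hp'⟩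

theorem dX_lt_dX_append (hX : SuffixCode X) {u w : List A} (hu : u ≠ [])
    (h : ∀ x ∈ X, ¬ x <+: u ++ w) : dX X w < dX X (u ++ w) := by
  obtain ⟨a, u, rfl⟩ := List.exists_cons_of_ne_nil hu
  rw [List.cons_append] at h ⊢
  rw [dX_cons_of_forall_not_prefix hX h]
  exact Nat.lt_succ_of_le (dX_le_dX_append hX u w)

theorem InStar.image_reverse {m : List A} (h : InStar X m) :
    InStar (List.reverse '' X) m.reverse := by
  obtain ⟨l, hl, rfl⟩ := h
  refine ⟨(l.map List.reverse).reverse, ?_, List.reverse_flatten.symm⟩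
  simp only [List.mem_reverse, List.mem_map]
  rintro _ ⟨u, hu, rfl⟩
  exact ⟨u, hl u hu, rfl⟩

theorem mem_parses_image_reverse {w : List A} {t : List A × List A × List A} :
    (t.2.2.reverse, t.2.1.reverse, t.1.reverse) ∈ Parses (List.reverse '' X) w.reverse ↔
      t ∈ Parses X w := by
  obtain ⟨q, m, p⟩ := t
  have hstar : InStar (List.reverse '' X) m.reverse ↔ InStar X m :=
    ⟨fun h => by simpa [Set.image_image] using h.image_reverse, InStar.image_reverse⟩
  simp only [Parses, Set.mem_ofPred_eq, Set.forall_mem_image, List.reverse_suffix,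
    List.reverse_prefix, hstar, ← List.reverse_append, List.reverse_inj, List.append_assoc]
  tauto

/-- Reading words backwards exchanges the two ends of a parse. -/
theorem dX_image_reverse (X : Set (List A)) (w : List A) :
    dX (List.reverse '' X) w.reverse = dX X w := by
  let τ : List A × List A × List A → List A × List A × List A :=
    fun t => (t.2.2.reverse, t.2.1.reverse, t.1.reverse)
  have hτ : Function.Involutive τ := fun t => by simp [τ]
  have himage : Parses (List.reverse '' X) w.reverse = τ '' Parses X w := by
    rw [hτ.image_eq_preimage_symm]
    ext t
    simpa [τ] using mem_parses_image_reverse (X := X) (w := w) (t := τ t)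
  rw [dX, dX, himage, Set.ncard_image_of_injective _ hτ.injective]

theorem PrefixCode.suffixCode_image_reverse (hX : PrefixCode X) :
    SuffixCode (List.reverse '' X) := by
  refine ⟨fun ⟨x, hx, hx'⟩ => hX.1 (List.reverse_eq_nil_iff.mp hx' ▸ hx), ?_⟩
  rintro _ ⟨u, hu, rfl⟩ _ ⟨v, hv, rfl⟩ h
  rw [hX.2 u hu v hv (List.reverse_suffix.mp h)]

theorem dX_le_dX_append_right (hX : PrefixCode X) (w u : List A) : dX X w ≤ dX X (w ++ u) := by
  rw [← dX_image_reverse X w, ← dX_image_reverse X (w ++ u), List.reverse_append]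
  exact dX_le_dX_append hX.suffixCode_image_reverse _ _

/-- If `y` were prefix-incomparable with `X`, then every `y v u` would have one more parse
than `u`, and iterating with recurrence would make the number of parses unbounded. -/
theorem exists_mem_prefix_or_prefix (hS : Recurrent S) (hX : SuffixCode X) {n : ℕ}
    (hbound : ∀ w ∈ S, dX X w ≤ n) {y : List A} (hy : y ∈ S) (hne : y ≠ []) :
    ∃ x ∈ X, x <+: y ∨ y <+: x := by
  by_contra! hinc
  have hfree : ∀ t, ∀ x ∈ X, ¬ x <+: y ++ t := fun t x hx hxy =>
    (List.prefix_or_prefix_of_prefix hxy (List.prefix_append y t)).elim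
      (hinc x hx).1 (hinc x hx).2
  have hgrow : ∀ k, ∃ u ∈ S, k ≤ dX X u := by
    intro k
    induction k with
    | zero => exact ⟨y, hy, Nat.zero_le _⟩
    | succ k ih =>
      obtain ⟨u, hu, hk⟩ := ih
      obtain ⟨v, hyvu⟩ := hS.2.2 y hy u hu
      refine ⟨y ++ v ++ u, hyvu, ?_⟩
      rw [List.append_assoc]
      have := dX_le_dX_append hX v u
      have := dX_lt_dX_append hX hne (hfree (v ++ u))
      omega
  obtain ⟨u, hu, hk⟩ := hgrow (n + 1)
  exact absurd (hbound u hu) (by omega)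

theorem exists_forall_length_le_prefix_mem (hXfin : X.Finite)
    (hcomp : ∀ y ∈ S, y ≠ [] → ∃ x ∈ X, x <+: y ∨ y <+: x) :
    ∃ L, ∀ y ∈ S, L ≤ y.length → ∃ x ∈ X, x <+: y := by
  obtain ⟨M, hM⟩ := (hXfin.image List.length).bddAbove
  refine ⟨M + 1, fun y hy hlen => ?_⟩
  obtain ⟨x, hx, hxy | hyx⟩ := hcomp y hy (List.ne_nil_of_length_pos (by omega))
  · exact ⟨x, hx, hxy⟩
  · have := hM ⟨x, hx, rfl⟩
    have := hyx.length_le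
    omega

theorem dX_eq_of_length_le (hS : Recurrent S) (hX : BifixCode X) {n L : ℕ}
    (hdeg : HasDegree S X n) (hL : ∀ y ∈ S, L ≤ y.length → ∃ x ∈ X, x <+: y)
    {y : List A} (hy : y ∈ S) (hlen : L ≤ y.length) : dX X y = n := by
  obtain ⟨⟨w, hw, rfl⟩, hbound⟩ := hdeg
  obtain ⟨v, hwvy⟩ := hS.2.2 w hw y hy
  have hshort : dX X (w ++ v ++ y) ≤ dX X y := by
    rw [dX_eq_ncard_parseSuffixes hX.2, dX_eq_ncard_parseSuffixes hX.2]
    refine Set.ncard_le_ncard (fun p hp => ⟨?_, hp.2⟩) (parseSuffixes_finite X y)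
    have hpS : p ∈ S := hS.2.1 p _ hp.1.isInfix hwvy
    have hplen : p.length < L := by
      by_contra! h
      obtain ⟨x, hx, hxp⟩ := hL p hpS h
      exact hp.2 x hx hxp
    exact (List.suffix_or_suffix_of_suffix hp.1 (List.suffix_append _ y)).resolve_right
      fun h => by have := h.length_le; omega
  have hlong : dX X w ≤ dX X (w ++ v ++ y) := by
    rw [List.append_assoc]
    exact dX_le_dX_append_right hX.1 w _
  exact le_antisymm (hbound ⟨y, hy, rfl⟩) (hlong.trans hshort)

/-- For an `S`-maximal prefix code `X`, this is the set `P` of proper prefixes of `X`. -/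
def noPrefixIn (S X : Set (List A)) : Set (List A) :=
  {p ∈ S | ∀ x ∈ X, ¬ x <+: p}

theorem nil_mem_noPrefixIn (hnil : [] ∈ S) (hX : [] ∉ X) : [] ∈ noPrefixIn S X :=
  ⟨hnil, fun _ hx hx' => hX (List.prefix_nil.mp hx' ▸ hx)⟩

theorem append_singleton_mem_noPrefixIn_or_mem {p : List A} {a : A}
    (hp : p ∈ noPrefixIn S X) (hpa : p ++ [a] ∈ S) :
    p ++ [a] ∈ noPrefixIn S X ∨ p ++ [a] ∈ X := by
  by_cases h : ∃ x ∈ X, x <+: p ++ [a]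
  · obtain ⟨x, hx, hxpa⟩ := h
    rcases List.prefix_concat_iff.mp hxpa with rfl | hxp
    · exact Or.inr hx
    · exact absurd hxp (hp.2 x hx)
  · exact Or.inl ⟨hpa, fun x hx hxpa => h ⟨x, hx, hxpa⟩⟩

theorem mem_noPrefixIn_of_append_singleton (hS : Factorial S) (hXS : X ⊆ S) (hX : PrefixCode X)
    {p : List A} {a : A} (h : p ++ [a] ∈ noPrefixIn S X ∨ p ++ [a] ∈ X) :
    p ∈ noPrefixIn S X := by
  have hpaS : p ++ [a] ∈ S := h.elim (·.1) (hXS ·)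
  refine ⟨hS p _ (List.prefix_append p [a]).isInfix hpaS, fun x hx hxp => ?_⟩
  have hxpa := hxp.trans (List.prefix_append p [a])
  rcases h with ⟨-, hpaX⟩ | hpa
  · exact hpaX x hx hxpa
  · obtain rfl := hX.2 x hx _ hpa hxpa
    simpa using hxp.length_le

theorem filter_dX_eq_one (hX : SuffixCode X) (hnil : [] ∈ S) (hP : (noPrefixIn S X).Finite) :
    {p ∈ hP.toFinset | dX X p = 1} = {[]} := by
  ext p
  simp only [Finset.mem_filter, Finset.mem_singleton, hP.mem_toFinset]
  refine ⟨fun ⟨hp, hpd⟩ => ?_, ?_⟩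
  · obtain _ | ⟨a, w⟩ := p
    · rfl
    · have := one_le_dX hX w
      rw [dX_cons_of_forall_not_prefix hX hp.2] at hpd
      omega
  · rintro rfl
    exact ⟨nil_mem_noPrefixIn hnil hX.1, dX_nil hX⟩

theorem cons_mem_noPrefixIn_and_dX_eq_iff (hX : SuffixCode X) {i : ℕ} {a : A} {w : List A}
    (hw : dX X w < i) :
    a :: w ∈ noPrefixIn S X ∧ dX X (a :: w) = i ↔ a :: w ∈ S ∧ i ≤ dX X (a :: w) := by
  refine ⟨fun ⟨hv, hvd⟩ => ⟨hv.1, hvd.ge⟩, fun ⟨hvS, hvd⟩ => ?_⟩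
  by_cases hpre : ∃ x ∈ X, x <+: a :: w
  · obtain ⟨x, hx, hxv⟩ := hpre
    rw [dX_cons_of_prefix hX hx hxv] at hvd
    omega
  · have hvX : ∀ x ∈ X, ¬ x <+: a :: w := fun x hx hxv => hpre ⟨x, hx, hxv⟩
    have := dX_cons_of_forall_not_prefix hX hvX
    exact ⟨⟨hvS, hvX⟩, by omega⟩

theorem sum_mS_noPrefixIn (hN : Neutral S) (hX : [] ∉ X) (hnil : [] ∈ S)
    (hP : (noPrefixIn S X).Finite) : ∑ p ∈ hP.toFinset, mS S p = mS S [] :=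
  Finset.sum_eq_single_of_mem [] (hP.mem_toFinset.mpr (nil_mem_noPrefixIn hnil hX))
    fun p hp hne => hN.2 p (hP.mem_toFinset.mp hp).1 hne

theorem ncard_extR_sub_one (S : Set (List A)) (w : List A) :
    ((extR S w).ncard : ℤ) - 1 = rhoS S w - mS S w := by
  rw [rhoS, mS]
  ring

theorem rhoS_eq_zero_of_notMem (hS : Factorial S) {w : List A} (hw : w ∉ S) : rhoS S w = 0 := by
  have hE : extE S w = ∅ := Set.eq_empty_of_forall_notMem fun e he =>
    hw (hS w _ ⟨[e.1], [e.2], by simp⟩ he)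
  have hL : extL S w = ∅ := Set.eq_empty_of_forall_notMem fun a ha =>
    hw (hS w _ (List.suffix_cons a w).isInfix ha)
  simp [rhoS, hE, hL]

theorem extR_eq_empty_of_notMem (hS : Factorial S) {w : List A} (hw : w ∉ S) : extR S w = ∅ :=
  Set.eq_empty_of_forall_notMem fun _ ha => hw (hS w _ (List.prefix_append w _).isInfix ha)

variable [Fintype A]

theorem ncard_extE_eq_sum (S : Set (List A)) (w : List A) :
    (extE S w).ncard = ∑ a, (extR S (a :: w)).ncard := by
  rw [← Nat.card_coe_set_eq, Nat.card_congr (Equiv.setProdEquivSigma _), Nat.card_sigma]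
  rfl

open Classical in
theorem ncard_setOf_eq_sum (p : A → Prop) : {a | p a}.ncard = ∑ a, if p a then 1 else 0 := by
  rw [Set.ncard_eq_toFinset_card', Set.toFinset_ofPred, Finset.card_filter]

/-- `ρ_S(w) = ∑_{a ∈ L_S(w)} (r_S(aw) - 1)`, and neutrality turns each term into `ρ_S(aw)`;
the other letters contribute nothing since `ρ_S` vanishes outside `S`. -/
theorem rhoS_eq_sum_rhoS_cons (hN : Neutral S) (w : List A) :
    rhoS S w = ∑ a, rhoS S (a :: w) := by
  classical
  rw [rhoS, ncard_extE_eq_sum, extL, ncard_setOf_eq_sum]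
  push_cast
  rw [← Finset.sum_sub_distrib]
  refine Finset.sum_congr rfl fun a _ => ?_
  split_ifs with ha
  · rw [ncard_extR_sub_one, hN.2 _ ha (List.cons_ne_nil a w), sub_zero]
  · rw [extR_eq_empty_of_notMem hN.1 ha, rhoS_eq_zero_of_notMem hN.1 ha]
    simp

theorem rhoS_nil (hA : ∀ a : A, [a] ∈ S) : rhoS S [] = Fintype.card A - chiS S := by
  have hL : extL S [] = Set.univ := Set.eq_univ_of_forall hA
  have hR : extR S [] = Set.univ := Set.eq_univ_of_forall hA
  simp only [rhoS, chiS, mS, hL, hR, Set.ncard_univ, Nat.card_eq_fintype_card]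
  ring

/-- `(P ∪ X) ∖ {ε}`, with `P = noPrefixIn S X`, is in bijection with the pairs `(p, a)` with
`p ∈ P` and `pa ∈ S`. -/
theorem ncard_eq_one_add_sum_ncard_extR (hS : Factorial S) (hnil : [] ∈ S) (hXS : X ⊆ S)
    (hX : PrefixCode X) (hXfin : X.Finite) (hP : (noPrefixIn S X).Finite) :
    (X.ncard : ℤ) = 1 + ∑ p ∈ hP.toFinset, ((extR S p).ncard - 1 : ℤ) := by
  classical
  set P := hP.toFinset
  set Y := hXfin.toFinset
  let T := (P ×ˢ Finset.univ).filter fun e : List A × A => e.1 ++ [e.2] ∈ S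
  have hT : T.card = ∑ p ∈ P, (extR S p).ncard := by
    simp only [T, Finset.card_filter, Finset.sum_product, extR, ncard_setOf_eq_sum]
  have hinj : Set.InjOn (fun e : List A × A => e.1 ++ [e.2]) T := fun e _ e' _ h => by
    obtain ⟨h₁, h₂⟩ := List.append_inj' h rfl
    exact Prod.ext h₁ (List.singleton_inj.mp h₂)
  have himage : T.image (fun e => e.1 ++ [e.2]) = (P ∪ Y).erase [] := by
    ext v
    simp only [T, P, Y, Finset.mem_image, Finset.mem_filter, Finset.mem_product,
      Finset.mem_univ, and_true, Finset.mem_erase, Finset.mem_union, Set.Finite.mem_toFinset,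
      Prod.exists]
    constructor
    · rintro ⟨p, a, ⟨hp, hpa⟩, rfl⟩
      exact ⟨by simp, append_singleton_mem_noPrefixIn_or_mem hp hpa⟩
    · rintro ⟨hne, hv⟩
      obtain ⟨p, a, rfl⟩ := (List.eq_nil_or_concat' v).resolve_left hne
      exact ⟨p, a, ⟨mem_noPrefixIn_of_append_singleton hS hXS hX hv, hv.elim (·.1) (hXS ·)⟩, rfl⟩
  have hdisj : Disjoint P Y := Finset.disjoint_left.mpr fun p hp hpY =>
    (hP.mem_toFinset.mp hp).2 p (hXfin.mem_toFinset.mp hpY) (List.prefix_refl p)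
  have hcard : T.card + 1 = P.card + Y.card := by
    rw [← Finset.card_image_of_injOn hinj, himage, Finset.card_erase_add_one,
      Finset.card_union_of_disjoint hdisj]
    exact Finset.mem_union_left _ (hP.mem_toFinset.mpr (nil_mem_noPrefixIn hnil hX.1))
  rw [show X.ncard = Y.card from Set.ncard_eq_toFinset_card X hXfin, Finset.sum_sub_distrib,
    ← Nat.cast_sum, ← hT]
  simp only [Finset.sum_const, nsmul_eq_mul, mul_one]
  omega

/-- Summing `f w = ∑ a, f (a :: w)` over `D` telescopes: every word of `D` other than `ε`
occurs once on each side. -/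
theorem sum_image_cons_sdiff_eq {M : Type*} [AddCommGroup M] [DecidableEq A] (f : List A → M)
    {D : Finset (List A)} (hnil : [] ∈ D) (hD : ∀ a w, a :: w ∈ D → w ∈ D)
    (hf : ∀ w ∈ D, f w = ∑ a, f (a :: w)) :
    ∑ v ∈ (Finset.univ ×ˢ D).image (fun e => e.1 :: e.2) \ D, f v = f [] := by
  set E := (Finset.univ ×ˢ D).image fun e : A × List A => e.1 :: e.2
  have hinj : Function.Injective fun e : A × List A => e.1 :: e.2 := fun e e' h =>
    Prod.ext (List.cons.inj h).1 (List.cons.inj h).2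
  have hE : ∑ v ∈ E, f v = ∑ w ∈ D, f w := by
    rw [Finset.sum_image hinj.injOn, Finset.sum_product_right]
    exact Finset.sum_congr rfl fun w hw => (hf w hw).symm
  have hsub : D.erase [] ⊆ E := fun v hv => by
    obtain ⟨hne, hv⟩ := Finset.mem_erase.mp hv
    obtain ⟨a, w, rfl⟩ := List.exists_cons_of_ne_nil hne
    exact Finset.mem_image.mpr ⟨(a, w), Finset.mem_product.mpr ⟨Finset.mem_univ a, hD a w hv⟩, rfl⟩
  have hsdiff : E \ D.erase [] = E \ D := by
    ext v
    simp only [Finset.mem_sdiff, Finset.mem_erase, not_and_or, not_not, and_congr_right_iff]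
    rintro hv
    obtain ⟨e, -, rfl⟩ := Finset.mem_image.mp hv
    simp
  have := Finset.sum_sdiff (f := f) hsub
  rw [hsdiff, hE, ← Finset.add_sum_erase D f hnil] at this
  exact add_right_cancel this

/-- For `i ≥ 2`, the words of `noPrefixIn S X` with `i` parses form the left boundary of the
suffix-closed set of words of `S` with fewer than `i` parses. -/
theorem sum_rhoS_filter_dX_eq (hN : Neutral S) (hX : SuffixCode X) (hnil : [] ∈ S)
    (hP : (noPrefixIn S X).Finite) {i : ℕ} (hi : 2 ≤ i) (hD : {w ∈ S | dX X w < i}.Finite) :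
    ∑ p ∈ hP.toFinset with dX X p = i, rhoS S p = rhoS S [] := by
  classical
  have hDmem : ∀ w, w ∈ hD.toFinset ↔ w ∈ S ∧ dX X w < i := fun w => hD.mem_toFinset
  rw [← sum_image_cons_sdiff_eq (rhoS S) (D := hD.toFinset)
    ((hDmem []).mpr ⟨hnil, by rw [dX_nil hX]; omega⟩)
    (fun a w h => (hDmem w).mpr ⟨hN.1 w _ (List.suffix_cons a w).isInfix ((hDmem _).mp h).1,
      (dX_le_dX_append hX [a] w).trans_lt ((hDmem _).mp h).2⟩)
    (fun w _ => rhoS_eq_sum_rhoS_cons hN w)]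
  apply Finset.sum_subset
  · intro p hp
    obtain ⟨hpP, hpd⟩ := Finset.mem_filter.mp hp |>.imp_left hP.mem_toFinset.mp
    obtain _ | ⟨a, w⟩ := p
    · rw [dX_nil hX] at hpd
      omega
    · have hw : dX X w < i := by
        have := dX_cons_of_forall_not_prefix hX hpP.2
        omega
      refine Finset.mem_sdiff.mpr ⟨Finset.mem_image.mpr ⟨(a, w), Finset.mem_product.mpr
        ⟨Finset.mem_univ a, (hDmem w).mpr ⟨hN.1 w _ (List.suffix_cons a w).isInfix hpP.1, hw⟩⟩,
          rfl⟩, fun h => ?_⟩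
      exact ((hDmem _).mp h).2.ne hpd
  · intro v hv hvP
    obtain ⟨hv, hvD⟩ := Finset.mem_sdiff.mp hv
    obtain ⟨⟨a, w⟩, hw, rfl⟩ := Finset.mem_image.mp hv
    by_contra hρ
    have hvS : a :: w ∈ S := by_contra fun h => hρ (rhoS_eq_zero_of_notMem hN.1 h)
    have hvi : i ≤ dX X (a :: w) := not_lt.mp fun h => hvD ((hDmem _).mpr ⟨hvS, h⟩)
    obtain ⟨hvP', hvd⟩ := (cons_mem_noPrefixIn_and_dX_eq_iff hX
      ((hDmem w).mp (Finset.mem_product.mp hw).2).2).mpr ⟨hvS, hvi⟩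
    exact hvP (Finset.mem_filter.mpr ⟨hP.mem_toFinset.mpr hvP', hvd⟩)

theorem sum_rhoS_noPrefixIn (hN : Neutral S) (hX : SuffixCode X) (hnil : [] ∈ S)
    (hP : (noPrefixIn S X).Finite) {n : ℕ} (hbound : ∀ w ∈ S, dX X w ≤ n)
    (hD : ∀ i ≤ n, {w ∈ S | dX X w < i}.Finite) :
    ∑ p ∈ hP.toFinset, rhoS S p = n * rhoS S [] := by
  rw [← Finset.sum_fiberwise_of_maps_to (t := Finset.Icc 1 n) fun p hp =>
    Finset.mem_Icc.mpr ⟨one_le_dX hX p, hbound p (hP.mem_toFinset.mp hp).1⟩]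
  have hlevel : ∀ i ∈ Finset.Icc 1 n, ∑ p ∈ hP.toFinset with dX X p = i, rhoS S p = rhoS S [] := by
    intro i hi
    obtain ⟨hi₁, hin⟩ := Finset.mem_Icc.mp hi
    rcases hi₁.eq_or_lt with rfl | hi₂
    · rw [filter_dX_eq_one hX hnil hP, Finset.sum_singleton]
    · exact sum_rhoS_filter_dX_eq hN hX hnil hP hi₂ (hD i hin)
  rw [Finset.sum_congr rfl hlevel, Finset.sum_const, Nat.card_Icc, nsmul_eq_mul]
  simp

end Paper

open Paper in
/-- Cardinality theorem for bifix codes: in a recurrent neutral set `S` containing the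
alphabet, any finite `S`-maximal bifix code `X` of `S`-degree `n` satisfies
`Card(X) = n (Card A - χ(S)) + χ(S)`. -/
theorem card_of_maximal_bifix_code
    {A : Type*} [Fintype A] (S X : Set (List A)) (n : ℕ)
    (hS : Recurrent S) (hN : Neutral S) (hA : ∀ a : A, [a] ∈ S)
    (hXfin : X.Finite) (hX : MaxBifixCode S X) (hdeg : HasDegree S X n) :
    (X.ncard : ℤ) = n * ((Fintype.card A : ℤ) - chiS S) + chiS S := by
  obtain ⟨hXS, hXb, -⟩ := hX
  have hbound : ∀ w ∈ S, dX X w ≤ n := fun w hw => hdeg.2 ⟨w, hw, rfl⟩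
  obtain ⟨w₀, hw₀, -⟩ := hdeg.1
  have hnil : [] ∈ S := hN.1 [] w₀ List.nil_infix hw₀
  obtain ⟨L, hL⟩ := exists_forall_length_le_prefix_mem hXfin fun y hy hne =>
    exists_mem_prefix_or_prefix hS hXb.2 hbound hy hne
  have hshort : ∀ w ∈ S, dX X w < n → w.length < L := fun w hw hwn => by
    by_contra! hlen
    exact hwn.ne (dX_eq_of_length_le hS hXb hdeg hL hw hlen)
  have hP : (noPrefixIn S X).Finite := (List.finite_length_lt A L).subset fun p hp => by
    show p.length < L
    by_contra! hlen
    obtain ⟨x, hx, hxp⟩ := hL p hp.1 hlen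
    exact hp.2 x hx hxp
  have hD : ∀ i ≤ n, {w ∈ S | dX X w < i}.Finite := fun i hi =>
    (List.finite_length_lt A L).subset fun w hw => hshort w hw.1 (hw.2.trans_le hi)
  calc (X.ncard : ℤ) = 1 + ∑ p ∈ hP.toFinset, ((extR S p).ncard - 1 : ℤ) :=
        ncard_eq_one_add_sum_ncard_extR hN.1 hnil hXS hXb.1 hXfin hP
    _ = 1 + (n * rhoS S [] - mS S []) := by
        simp only [ncard_extR_sub_one, Finset.sum_sub_distrib,
          sum_rhoS_noPrefixIn hN hXb.2 hnil hP hbound hD, sum_mS_noPrefixIn hN hXb.1.1 hnil hP]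
    _ = n * ((Fintype.card A : ℤ) - chiS S) + chiS S := by
        rw [rhoS_nil hA, chiS]
        ring
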